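/- arXiv:2411.14958 — 3 statements merged into one kernel-verified Lean document; each statement's English description precedes it below -/
import Mathlib

section
/- Let G be a finite group, p a prime, and K a p-subgroup of G of depth d. Then K is contained in exactly one p-intersection of depth d. -/
/-- A subgroup `H` of `G` is a *`p`-intersection* if it is the intersection of a nonempty
family of Sylow `p`-subgroups of `G`. -/
def IsPInter {G : Type*} [Group G] (p : ℕ) (H : Subgroup G) : Prop :=
  ∃ S : Set (Sylow p G), S.Nonempty ∧ H = ⨅ P ∈ S, (P : Subgroup G)

/-- `ChainToSylow p H d` says that there is a chain
`H = H_d < H_{d-1} < ⋯ < H_1 = P` of proper inclusions with `P` a Sylow `p`-subgroup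
and each `H_i` a `p`-intersection. -/
def ChainToSylow {G : Type*} [Group G] (p : ℕ) (H : Subgroup G) (d : ℕ) : Prop :=
  1 ≤ d ∧ ∃ c : ℕ → Subgroup G, c d = H ∧ (∃ P : Sylow p G, c 1 = ↑P) ∧
    (∀ i, 1 ≤ i → i ≤ d → IsPInter p (c i)) ∧
    (∀ i, 1 ≤ i → i < d → c (i + 1) < c i)

/-- The (`p`-Sylow) depth of a `p`-intersection: the largest `d ≥ 1` admitting a chain
`H = H_d < ⋯ < H_1 = P` as above. -/
noncomputable def interDepth {G : Type*} [Group G] (p : ℕ) (H : Subgroup G) : ℕ :=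
  sSup {d | ChainToSylow p H d}

/-- The (`p`-Sylow) depth of a `p`-subgroup: the maximal depth of a `p`-intersection
containing it. -/
noncomputable def subDepth {G : Type*} [Group G] (p : ℕ) (K : Subgroup G) : ℕ :=
  sSup {d | ∃ H : Subgroup G, IsPInter p H ∧ K ≤ H ∧ interDepth p H = d}

section Aux
variable {G : Type*} [Group G] {p : ℕ}

lemma isPInter_inf {H H' : Subgroup G} (h : IsPInter p H) (h' : IsPInter p H') :
    IsPInter p (H ⊓ H') := by
  obtain ⟨S, hS, rfl⟩ := h
  obtain ⟨S', hS', rfl⟩ := h'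
  refine ⟨S ∪ S', hS.mono Set.subset_union_left, ?_⟩
  exact (iInf_union (s := S) (t := S') (f := fun P : Sylow p G => (P : Subgroup G))).symm

lemma chain_one (P : Sylow p G) : ChainToSylow p (P : Subgroup G) 1 :=
  ⟨le_refl 1, fun _ => (P : Subgroup G), rfl, ⟨P, rfl⟩,
    fun _ _ _ => ⟨{P}, ⟨P, rfl⟩, by simp⟩, fun i h1 h2 => absurd h2 (by omega)⟩

lemma chain_extend {H H' : Subgroup G} {d : ℕ} (h : ChainToSylow p H d)
    (hlt : H' < H) (hH' : IsPInter p H') : ChainToSylow p H' (d + 1) := by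
  obtain ⟨hd1, c, hcd, hP, hinter, hstrict⟩ := h
  refine ⟨by omega, fun i => if i = d + 1 then H' else c i, by simp, ?_, ?_, ?_⟩
  · obtain ⟨P, hP⟩ := hP
    refine ⟨P, ?_⟩
    show (if 1 = d + 1 then H' else c 1) = ↑P
    rw [if_neg (by omega), hP]
  · intro i h1 h2
    show IsPInter p (if i = d + 1 then H' else c i)
    by_cases hi : i = d + 1
    · simpa [hi] using hH'
    · rw [if_neg hi]; exact hinter i h1 (by omega)
  · intro i h1 h2
    show (if i + 1 = d + 1 then H' else c (i+1)) < (if i = d + 1 then H' else c i)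
    by_cases hi : i = d
    · subst hi
      rw [if_pos rfl, if_neg (by omega), hcd]
      exact hlt
    · rw [if_neg (by omega), if_neg (by omega)]
      exact hstrict i h1 (by omega)

variable [Fintype G]

lemma chain_le_card {H : Subgroup G} {d : ℕ} (h : ChainToSylow p H d) :
    d ≤ Nat.card (Subgroup G) := by
  obtain ⟨hd1, c, hcd, hP, hinter, hstrict⟩ := h
  have anti : ∀ j, j ≤ d → ∀ i, 1 ≤ i → i < j → c j < c i := by
    intro j
    induction j with
    | zero => omega
    | succ n ih =>
      intro hj i h1 h2
      rcases Nat.lt_succ_iff_lt_or_eq.mp h2 with h | h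
      · exact lt_trans (hstrict n (by omega) (by omega)) (ih (by omega) i h1 h)
      · subst h; exact hstrict i h1 (by omega)
  have : Finite (Subgroup G) := Finite.of_injective (fun H => (H : Set G)) SetLike.coe_injective
  have := Fintype.ofFinite (Subgroup G)
  have hinj : Set.InjOn c (Finset.Icc 1 d) := by
    intro i hi j hj hij
    simp only [Finset.coe_Icc, Set.mem_Icc] at hi hj
    by_contra hne
    rcases Nat.lt_or_ge i j with h | h
    · exact absurd hij (anti j hj.2 i hi.1 h).ne'
    · exact absurd hij.symm (anti i hi.2 j hj.1 (by omega)).ne'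
  have := Finset.card_le_card_of_injOn c (fun x _ => Finset.mem_univ (c x)) hinj
  simp only [Nat.card_Icc, Finset.card_univ] at this
  rw [Nat.card_eq_fintype_card]
  omega

lemma chainSet_bdd (H : Subgroup G) : BddAbove {d | ChainToSylow p H d} :=
  ⟨Nat.card (Subgroup G), fun _ h => chain_le_card h⟩


end Aux

theorem statement2 {G : Type*} [Group G] [Fintype G] (p : ℕ) (hp : p.Prime)
    (hdvd : p ∣ Fintype.card G) (K : Subgroup G) (hK : IsPGroup p K)
    (d : ℕ) (hd : subDepth p K = d) :
    ∃! H : Subgroup G, IsPInter p H ∧ K ≤ H ∧ interDepth p H = d := by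
  classical
  obtain ⟨P, hKP⟩ := hK.exists_le_sylow
  have hPd : 1 ≤ interDepth p (P : Subgroup G) :=
    le_csSup (chainSet_bdd _) (chain_one P)
  have hmem : interDepth p (P : Subgroup G) ∈
      {e | ∃ H : Subgroup G, IsPInter p H ∧ K ≤ H ∧ interDepth p H = e} :=
    ⟨(P : Subgroup G), ⟨{P}, ⟨P, rfl⟩, by simp⟩, hKP, rfl⟩
  have hbdd : BddAbove {e | ∃ H : Subgroup G, IsPInter p H ∧ K ≤ H ∧ interDepth p H = e} := by
    refine ⟨Nat.card (Subgroup G), fun e he => ?_⟩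
    obtain ⟨H, hH, hKH, rfl⟩ := he
    exact csSup_le' fun x hx => chain_le_card hx
  have hd1 : 1 ≤ d := by
    rw [← hd]
    exact le_trans hPd (le_csSup hbdd hmem)
  have hdmem : d ∈ {e | ∃ H : Subgroup G, IsPInter p H ∧ K ≤ H ∧ interDepth p H = e} := by
    rw [← hd]
    exact Nat.sSup_mem ⟨_, hmem⟩ hbdd
  obtain ⟨H, hH, hKH, hHd⟩ := hdmem
  refine ⟨H, ⟨hH, hKH, hHd⟩, ?_⟩
  rintro H' ⟨hH', hKH', hH'd⟩
  by_contra hne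
  have key : ∀ A B : Subgroup G, IsPInter p A → IsPInter p B → K ≤ A → K ≤ B →
      interDepth p A = d → A ⊓ B < A → False := by
    intro A B hA hB hKA hKB hAd hlt
    have hchain : ChainToSylow p A d := by
      have hne2 : {e | ChainToSylow p A e}.Nonempty := by
        by_contra h
        rw [Set.not_nonempty_iff_eq_empty] at h
        have h0 : interDepth p A = 0 := by
          rw [interDepth, h, csSup_empty]; rfl
        omega
      rw [← hAd]
      exact Nat.sSup_mem hne2 (chainSet_bdd A)
    have hext : ChainToSylow p (A ⊓ B) (d + 1) :=
      chain_extend hchain hlt (isPInter_inf hA hB)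
    have h1 : d + 1 ≤ interDepth p (A ⊓ B) := le_csSup (chainSet_bdd _) hext
    have h2 : interDepth p (A ⊓ B) ≤ d := by
      rw [← hd]
      exact le_csSup hbdd ⟨A ⊓ B, isPInter_inf hA hB, le_inf hKA hKB, rfl⟩
    omega
  have hne' : H' ⊓ H ≠ H' ∨ H ⊓ H' ≠ H := by
    by_contra hc
    push_neg at hc
    exact hne (hc.1.symm.trans (by rw [inf_comm, hc.2]))
  rcases hne' with h | h
  · exact key H' H hH' hH hKH' hKH hH'd (lt_of_le_of_ne inf_le_left h)
  · exact key H H' hH hH' hKH hKH' hHd (lt_of_le_of_ne inf_le_left h)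
end

section
/- Let G be a finite group, H ≤ G a subgroup, and n ≥ 0 an integer. Let Δ^G_n denote the subspace of the standard simplex Δ^G consisting of points with at most n+1 nonzero coordinates, with H acting by (h · t)_g = t_{gh}. Then the map f(t)_g = (1/|H|) · t_{gH} restricts to a homeomorphism from Δ^{G/H}_{⌊(n+1)/|H|⌋ - 1} (the points of the standard simplex on G/H with at most ⌊(n+1)/|H|⌋ nonzero coordinates) onto the subspace of H-fixed points of Δ^G_n. -/
open scoped Classical

/-- The subspace of the standard simplex on `ι` consisting of points with at most `m`
nonzero coordinates. (Thus `Δ^ι_k` of the paper is `simplexAtMost ι (k + 1)`.) -/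
def simplexAtMost (ι : Type*) [Fintype ι] (m : ℕ) : Set (ι → ℝ) :=
  {t | t ∈ stdSimplex ℝ ι ∧ Set.ncard {i | t i ≠ 0} ≤ m}

/-- The set of `H`-fixed points of `Δ^G_n` (points of the standard simplex on `G` with at
most `n + 1` nonzero coordinates), where `H` acts by `(h • t) g = t (g * h)`. -/
def fixedSkel (G : Type*) [Group G] [Fintype G] (H : Subgroup G) (n : ℕ) : Set (G → ℝ) :=
  {t | t ∈ simplexAtMost G (n + 1) ∧ ∀ (g : G) (h : H), t (g * h) = t g}

section aux

variable {G : Type*} [Group G] [Fintype G] (H : Subgroup G)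

lemma ncard_preimage_mk (S : Set (G ⧸ H)) :
    Set.ncard (QuotientGroup.mk ⁻¹' S : Set G) = Nat.card H * S.ncard := by
  rw [← Nat.card_coe_set_eq, ← Nat.card_coe_set_eq,
    Nat.card_congr (QuotientGroup.preimageMkEquivSubgroupProdSet H S), Nat.card_prod]

lemma card_fiber_mk (q : G ⧸ H) :
    (Finset.univ.filter (fun g : G => (g : G ⧸ H) = q)).card = Nat.card H := by
  have h1 : (Finset.univ.filter (fun g : G => (g : G ⧸ H) = q)).card
      = Set.ncard (QuotientGroup.mk ⁻¹' ({q} : Set (G ⧸ H)) : Set G) := by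
    rw [Set.ncard_eq_toFinset_card']
    congr 1
    ext g
    simp [Set.mem_toFinset]
  rw [h1, ncard_preimage_mk, Set.ncard_singleton, mul_one]

lemma sum_comp_mk (u : (G ⧸ H) → ℝ) :
    ∑ g : G, u (↑g) = (Nat.card H : ℝ) * ∑ q : G ⧸ H, u q := by
  rw [← Finset.sum_fiberwise' Finset.univ (fun g : G => (g : G ⧸ H)) u]
  rw [Finset.mul_sum]
  refine Finset.sum_congr rfl fun q _ => ?_
  rw [Finset.sum_const, card_fiber_mk, nsmul_eq_mul]

end aux

/-- The map `f(t)_g = |H|⁻¹ · t_{gH}` restricts to a homeomorphism from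
`Δ^{G/H}_{⌊(n+1)/|H|⌋ - 1}`, i.e. the points of the standard simplex on `G/H` with at most
`⌊(n+1)/|H|⌋` nonzero coordinates, onto the `H`-fixed points of `Δ^G_n`. -/
theorem statement8 {G : Type*} [Group G] [Fintype G] (H : Subgroup G) (n : ℕ) :
    ∃ e : simplexAtMost (G ⧸ H) ((n + 1) / Nat.card H) ≃ₜ fixedSkel G H n,
      ∀ (t : simplexAtMost (G ⧸ H) ((n + 1) / Nat.card H)) (g : G),
        (e t : G → ℝ) g = (Nat.card H : ℝ)⁻¹ * (t : (G ⧸ H) → ℝ) (g : G ⧸ H) := by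
  classical
  have hHpos : 0 < Nat.card H := Nat.card_pos
  have hH : (Nat.card H : ℝ) ≠ 0 := by positivity
  set F : ((G ⧸ H) → ℝ) → (G → ℝ) :=
    fun t g => (Nat.card H : ℝ)⁻¹ * t (↑g) with hF
  set Finv : (G → ℝ) → ((G ⧸ H) → ℝ) :=
    fun s q => (Nat.card H : ℝ) * s q.out with hFinv
  -- constancy on cosets
  have hconst : ∀ s ∈ fixedSkel G H n, ∀ g g' : G, (g : G ⧸ H) = (g' : G ⧸ H) → s g = s g' := by
    intro s hs g g' hq
    have hm : g⁻¹ * g' ∈ H := (QuotientGroup.eq).mp hq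
    have : g' = g * (⟨g⁻¹ * g', hm⟩ : H) := by group
    rw [this, hs.2]
  have hmemF : ∀ t ∈ simplexAtMost (G ⧸ H) ((n + 1) / Nat.card H), F t ∈ fixedSkel G H n := by
    intro t ht
    refine ⟨⟨⟨fun g => mul_nonneg (by positivity) (ht.1.1 _), ?_⟩, ?_⟩, ?_⟩
    · have h : ∑ g : G, F t g = (Nat.card H : ℝ) * ∑ q : G ⧸ H, (Nat.card H : ℝ)⁻¹ * t q :=
        sum_comp_mk H (fun q : G ⧸ H => (Nat.card H : ℝ)⁻¹ * t q)
      rw [h, ← Finset.mul_sum, ← mul_assoc, mul_inv_cancel₀ hH, one_mul, ht.1.2]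
    · have hset : {g : G | F t g ≠ 0} = QuotientGroup.mk ⁻¹' {q | t q ≠ 0} := by
        ext g
        simp only [Set.mem_setOf_eq, Set.mem_preimage, hF, ne_eq, mul_eq_zero, not_or,
          inv_eq_zero]
        tauto
      rw [hset, ncard_preimage_mk]
      calc Nat.card H * Set.ncard {q | t q ≠ 0}
          ≤ Nat.card H * ((n + 1) / Nat.card H) := Nat.mul_le_mul_left _ ht.2
        _ ≤ n + 1 := by rw [mul_comm]; exact Nat.div_mul_le_self _ _
    · intro g h
      simp only [hF]
      congr 1
      exact congrArg t (QuotientGroup.mk_mul_of_mem g h.2)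
  have hmemI : ∀ s ∈ fixedSkel G H n, Finv s ∈ simplexAtMost (G ⧸ H) ((n + 1) / Nat.card H) := by
    intro s hs
    have hsu : ∀ g : G, s g = s ((g : G ⧸ H)).out := by
      intro g
      exact hconst s hs g _ (QuotientGroup.out_eq' _).symm
    refine ⟨⟨fun q => mul_nonneg (by positivity) (hs.1.1.1 _), ?_⟩, ?_⟩
    · have h1 : ∑ g : G, (fun q : G ⧸ H => s q.out) (↑g)
          = (Nat.card H : ℝ) * ∑ q : G ⧸ H, s q.out := sum_comp_mk H (fun q : G ⧸ H => s q.out)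
      have h2 : ∑ g : G, s g = 1 := hs.1.1.2
      have h3 : ∑ g : G, (fun q : G ⧸ H => s q.out) (↑g) = ∑ g : G, s g :=
        Finset.sum_congr rfl fun g _ => (hsu g).symm
      calc ∑ q : G ⧸ H, Finv s q = (Nat.card H : ℝ) * ∑ q : G ⧸ H, s q.out := by
            rw [Finset.mul_sum]
        _ = 1 := by rw [← h1, h3, h2]
    · have hset : {g : G | s g ≠ 0} = QuotientGroup.mk ⁻¹' {q | Finv s q ≠ 0} := by
        ext g
        simp only [Set.mem_setOf_eq, Set.mem_preimage, hFinv, ne_eq, mul_eq_zero, not_or]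
        rw [← hsu g]
        tauto
      have hcard : Nat.card H * Set.ncard {q | Finv s q ≠ 0} ≤ n + 1 := by
        rw [← ncard_preimage_mk, ← hset]; exact hs.1.2
      rw [Nat.le_div_iff_mul_le hHpos, mul_comm]
      exact hcard
  have hleft : ∀ t, Finv (F t) = t := by
    intro t
    funext q
    simp only [hFinv, hF, QuotientGroup.out_eq']
    rw [← mul_assoc, mul_inv_cancel₀ hH, one_mul]
  have hright : ∀ s ∈ fixedSkel G H n, F (Finv s) = s := by
    intro s hs
    funext g
    simp only [hF, hFinv]
    rw [← mul_assoc, inv_mul_cancel₀ hH, one_mul]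
    exact (hconst s hs g _ (QuotientGroup.out_eq' _).symm).symm
  refine ⟨{
      toFun := fun t => ⟨F t.1, hmemF t.1 t.2⟩
      invFun := fun s => ⟨Finv s.1, hmemI s.1 s.2⟩
      left_inv := fun t => Subtype.ext (hleft t.1)
      right_inv := fun s => Subtype.ext (hright s.1 s.2)
      continuous_toFun := ?_
      continuous_invFun := ?_ }, fun t g => rfl⟩
  · refine Continuous.subtype_mk ?_ _
    exact continuous_pi fun g =>
      continuous_const.mul ((continuous_apply _).comp continuous_subtype_val)
  · refine Continuous.subtype_mk ?_ _
    exact continuous_pi fun q =>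
      continuous_const.mul ((continuous_apply _).comp continuous_subtype_val)
end

section
/- Let G be a finite group, H ≤ G a subgroup, and n an integer with |H| ≤ n + 1 < 2|H|. Then the set of H-fixed points of Δ^G_n consists exactly of the points u_{gH} for cosets gH ∈ G/H, where u_{gH}(x) = 1/|H| if x ∈ gH and u_{gH}(x) = 0 otherwise; in particular this fixed-point set is a discrete subspace of Δ^G_n with exactly [G : H] points. -/
open scoped Classical

lemma aux_sum_indicator_const {α : Type*} [Fintype α] (S : Set α) (c : ℝ) :
    ∑ x : α, S.indicator (fun _ => c) x = S.ncard * c := by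
  classical
  rw [Set.ncard_eq_toFinset_card' S]
  simp only [Set.indicator_apply]
  rw [Finset.sum_ite, Finset.sum_const_zero, add_zero, Finset.sum_const, nsmul_eq_mul]
  have : (Finset.univ.filter fun x => x ∈ S) = S.toFinset := by
    ext x; simp
  rw [this]

lemma aux_coset_ncard {G : Type*} [Group G] [Fintype G] (H : Subgroup G) (q : G ⧸ H) :
    Set.ncard {x : G | (x : G ⧸ H) = q} = Nat.card H := by
  obtain ⟨g, rfl⟩ := QuotientGroup.mk_surjective q
  rw [← Nat.card_coe_set_eq]
  refine (Nat.card_congr ?_).symm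
  exact {
    toFun := fun h => ⟨g * h, QuotientGroup.mk_mul_of_mem g h.2⟩
    invFun := fun x => ⟨g⁻¹ * x, by
      have hx : (x : G)⁻¹ * g ∈ H := QuotientGroup.eq.mp x.2
      simpa [mul_inv_rev] using H.inv_mem hx⟩
    left_inv := fun h => by ext; simp
    right_inv := fun x => by ext; simp }

lemma aux_coset_same {G : Type*} [Group G] [Fintype G] (H : Subgroup G) {t : G → ℝ}
    (hfix : ∀ (g : G) (h : H), t (g * h) = t g) {g x : G}
    (hx : (x : G ⧸ H) = (g : G ⧸ H)) : t x = t g := by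
  have hm : g⁻¹ * x ∈ H := QuotientGroup.eq.mp hx.symm
  have := hfix g ⟨g⁻¹ * x, hm⟩
  simpa using this

/-- If `|H| ≤ n + 1 < 2|H|`, then the `H`-fixed points of `Δ^G_n` are exactly the points
`u_{gH}` for cosets `gH ∈ G/H`, where `u_{gH}` takes the value `|H|⁻¹` on `gH` and `0`
elsewhere; in particular the fixed-point set is discrete with exactly `[G : H]` points. -/
theorem statement10 {G : Type*} [Group G] [Fintype G] (H : Subgroup G) (n : ℕ)
    (h1 : Nat.card H ≤ n + 1) (h2 : n + 1 < 2 * Nat.card H) :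
    fixedSkel G H n =
        Set.range (fun q : G ⧸ H =>
          Set.indicator {x : G | (x : G ⧸ H) = q} fun _ => (Nat.card H : ℝ)⁻¹) ∧
      DiscreteTopology (fixedSkel G H n) ∧
      Nat.card (fixedSkel G H n) = H.index := by
  have hHpos : 0 < Nat.card H := Nat.card_pos
  have hHne : (Nat.card H : ℝ) ≠ 0 := by positivity
  set f : G ⧸ H → G → ℝ := fun q =>
    Set.indicator {x : G | (x : G ⧸ H) = q} fun _ => (Nat.card H : ℝ)⁻¹ with hf
  have hEq : fixedSkel G H n = Set.range f := by
    ext t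
    constructor
    · rintro ⟨⟨⟨hpos, hsum⟩, hcard⟩, hfix⟩
      -- support is nonempty
      have hne : {i | t i ≠ 0}.Nonempty := by
        by_contra hemp
        rw [Set.not_nonempty_iff_eq_empty, Set.eq_empty_iff_forall_notMem] at hemp
        have : ∀ i, t i = 0 := fun i => not_not.mp (hemp i)
        simp [this] at hsum
      obtain ⟨g, hg⟩ := hne
      -- the support is exactly the coset of g
      have hsub : {i | t i ≠ 0} ⊆ {x : G | (x : G ⧸ H) = (g : G ⧸ H)} := by
        intro x hx
        by_contra hxg
        have hdisj : Disjoint {a : G | (a : G ⧸ H) = (x : G ⧸ H)}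
            {a : G | (a : G ⧸ H) = (g : G ⧸ H)} := by
          rw [Set.disjoint_left]
          intro a ha ha'
          exact hxg (Eq.trans (Eq.symm ha) ha')
        have hsubx : {a : G | (a : G ⧸ H) = (x : G ⧸ H)} ⊆ {i | t i ≠ 0} := by
          intro a ha
          have := aux_coset_same H hfix ha
          simpa [this] using hx
        have hsubg : {a : G | (a : G ⧸ H) = (g : G ⧸ H)} ⊆ {i | t i ≠ 0} := by
          intro a ha
          have := aux_coset_same H hfix ha
          simpa [this] using hg
        have hcard2 : 2 * Nat.card H ≤ Set.ncard {i | t i ≠ 0} := by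
          calc 2 * Nat.card H
              = Set.ncard {a : G | (a : G ⧸ H) = (x : G ⧸ H)} +
                Set.ncard {a : G | (a : G ⧸ H) = (g : G ⧸ H)} := by
                rw [aux_coset_ncard, aux_coset_ncard]; ring
            _ = Set.ncard ({a : G | (a : G ⧸ H) = (x : G ⧸ H)} ∪
                {a : G | (a : G ⧸ H) = (g : G ⧸ H)}) :=
                (Set.ncard_union_eq hdisj (Set.toFinite _) (Set.toFinite _)).symm
            _ ≤ Set.ncard {i | t i ≠ 0} :=
                Set.ncard_le_ncard (Set.union_subset hsubx hsubg) (Set.toFinite _)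
        omega
      have hsup : {a : G | (a : G ⧸ H) = (g : G ⧸ H)} ⊆ {i | t i ≠ 0} := by
        intro a ha
        have := aux_coset_same H hfix ha
        simpa [this] using hg
      have hSeq : {i | t i ≠ 0} = {a : G | (a : G ⧸ H) = (g : G ⧸ H)} :=
        Set.Subset.antisymm hsub hsup
      -- t is the indicator of the coset with value t g
      have ht : t = Set.indicator {a : G | (a : G ⧸ H) = (g : G ⧸ H)} (fun _ => t g) := by
        funext x
        by_cases hx : (x : G ⧸ H) = (g : G ⧸ H)
        · have hx' : x ∈ {a : G | (a : G ⧸ H) = (g : G ⧸ H)} := hx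
          rw [Set.indicator_of_mem hx', aux_coset_same H hfix hx]
        · have hx' : x ∉ {a : G | (a : G ⧸ H) = (g : G ⧸ H)} := hx
          rw [Set.indicator_of_notMem hx']
          by_contra hx0
          exact hx (hsub hx0)
      have hval : t g = (Nat.card H : ℝ)⁻¹ := by
        have : (1 : ℝ) = (Nat.card H : ℝ) * t g := by
          rw [← hsum]
          conv_lhs => rw [ht]
          rw [aux_sum_indicator_const, aux_coset_ncard]
        field_simp at this ⊢
        linarith
      exact ⟨(g : G ⧸ H), by rw [hf]; simp only; rw [← hval, ← ht]⟩
    · rintro ⟨q, rfl⟩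
      refine ⟨⟨⟨fun x => ?_, ?_⟩, ?_⟩, fun g h => ?_⟩
      · exact Set.indicator_nonneg (fun _ _ => by positivity) x
      · rw [aux_sum_indicator_const, aux_coset_ncard]
        field_simp
      · have hsub : {i | f q i ≠ 0} ⊆ {x : G | (x : G ⧸ H) = q} := by
          intro x hx
          by_contra hxq
          exact hx (Set.indicator_of_notMem hxq _)
        calc Set.ncard {i | f q i ≠ 0} ≤ Set.ncard {x : G | (x : G ⧸ H) = q} :=
              Set.ncard_le_ncard hsub (Set.toFinite _)
          _ = Nat.card H := aux_coset_ncard H q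
          _ ≤ n + 1 := h1
      · have : ((g * (h : G) : G) : G ⧸ H) = (g : G ⧸ H) :=
          QuotientGroup.mk_mul_of_mem g h.2
        simp only [hf, Set.indicator_apply, Set.mem_setOf_eq, this]
  have hinj : Function.Injective f := by
    intro q q' hqq
    obtain ⟨g, rfl⟩ := QuotientGroup.mk_surjective q
    have this0 := congrFun hqq g
    simp only [hf] at this0
    by_contra hne
    rw [Set.indicator_of_mem (show g ∈ {x : G | (x : G ⧸ H) = (g : G ⧸ H)} from rfl),
      Set.indicator_of_notMem (show g ∉ {x : G | (x : G ⧸ H) = q'} from hne)] at this0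
    exact (inv_ne_zero hHne) this0
  refine ⟨hEq, ?_, ?_⟩
  · rw [hEq]
    haveI := (Set.finite_range f).to_subtype
    infer_instance
  · rw [hEq, Nat.card_range_of_injective hinj]
    rfl
end
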